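/- arXiv:1809.00535 — 2 statements merged into one kernel-verified Lean document; each statement's English description precedes it below -/
import Mathlib

section
/- Inner-product identity between a TT-tensor and a Kruskal tensor (order 3, middle-mode form): for cores G₁ : I×P, G₂ : P×J×Q, G₃ : Q×K and factor matrices A : I×R, B : J×R, C : K×R over ℝ, the Frobenius inner product ⟨G₁•G₂•G₃, ⟦A,B,C⟧⟩ equals tr([G₂]₍₂₎ (Ψ_> ⊙ Ψ_<) Bᵀ), where Ψ_< = G₁ᵀA (P×R), Ψ_> = G₃C (Q×R), [G₂]₍₂₎ is the J×(PQ) mode-2 unfolding of G₂, and ⊙ is the Khatri-Rao product. -/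
open Matrix

/-- Inner-product identity between an order-3 TT-tensor and a Kruskal
tensor: `⟨G₁•G₂•G₃, ⟦A,B,C⟧⟩ = tr([G₂]₍₂₎ (Ψ_> ⊙ Ψ_<) Bᵀ)` with `Ψ_< = G₁ᵀA`,
`Ψ_> = G₃C`. -/
theorem tt_kruskal_inner_product_middle_mode {I J K P Q R : ℕ}
    (G₁ : Matrix (Fin I) (Fin P) ℝ) (G₂ : Fin P → Fin J → Fin Q → ℝ)
    (G₃ : Matrix (Fin Q) (Fin K) ℝ)
    (A : Matrix (Fin I) (Fin R) ℝ) (B : Matrix (Fin J) (Fin R) ℝ)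
    (C : Matrix (Fin K) (Fin R) ℝ)
    (G₂unf : Matrix (Fin J) (Fin P × Fin Q) ℝ) (hG₂unf : ∀ j pq, G₂unf j pq = G₂ pq.1 j pq.2)
    (Ψlt : Matrix (Fin P) (Fin R) ℝ) (hΨlt : Ψlt = G₁ᵀ * A)
    (Ψgt : Matrix (Fin Q) (Fin R) ℝ) (hΨgt : Ψgt = G₃ * C)
    (Kh : Matrix (Fin P × Fin Q) (Fin R) ℝ) (hKh : ∀ pq r, Kh pq r = Ψgt pq.2 r * Ψlt pq.1 r) :
    (∑ i, ∑ j, ∑ k,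
        (∑ p, ∑ q, G₁ i p * G₂ p j q * G₃ q k) * (∑ r, A i r * B j r * C k r))
      = Matrix.trace (G₂unf * Kh * Bᵀ) := by
  subst hΨlt hΨgt
  have key : (∑ x : Fin I × Fin J × Fin K × Fin R × Fin P × Fin Q,
      G₁ x.1 x.2.2.2.2.1 * G₂ x.2.2.2.2.1 x.2.1 x.2.2.2.2.2 * G₃ x.2.2.2.2.2 x.2.2.1 *
        (A x.1 x.2.2.2.1 * B x.2.1 x.2.2.2.1 * C x.2.2.1 x.2.2.2.1)) =
      ∑ y : Fin J × Fin R × Fin P × Fin Q × Fin I × Fin K,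
      G₂ y.2.2.1 y.1 y.2.2.2.1 * (G₃ y.2.2.2.1 y.2.2.2.2.2 * C y.2.2.2.2.2 y.2.1 *
        (G₁ y.2.2.2.2.1 y.2.2.1 * A y.2.2.2.2.1 y.2.1)) * B y.1 y.2.1 := by
    refine Fintype.sum_equiv
      ⟨fun x => (x.2.1, x.2.2.2.1, x.2.2.2.2.1, x.2.2.2.2.2, x.1, x.2.2.1),
       fun y => (y.2.2.2.2.1, y.1, y.2.2.2.2.2, y.2.1, y.2.2.1, y.2.2.2.1),
       fun _ => rfl, fun _ => rfl⟩ _ _ (fun _ => by dsimp; ring)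
  calc (∑ i, ∑ j, ∑ k,
        (∑ p, ∑ q, G₁ i p * G₂ p j q * G₃ q k) * (∑ r, A i r * B j r * C k r))
      = ∑ x : Fin I × Fin J × Fin K × Fin R × Fin P × Fin Q,
        G₁ x.1 x.2.2.2.2.1 * G₂ x.2.2.2.2.1 x.2.1 x.2.2.2.2.2 * G₃ x.2.2.2.2.2 x.2.2.1 *
          (A x.1 x.2.2.2.1 * B x.2.1 x.2.2.2.1 * C x.2.2.1 x.2.2.2.1) := by
        simp only [Fintype.sum_prod_type, Finset.sum_mul, Finset.mul_sum]
    _ = ∑ y : Fin J × Fin R × Fin P × Fin Q × Fin I × Fin K,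
        G₂ y.2.2.1 y.1 y.2.2.2.1 * (G₃ y.2.2.2.1 y.2.2.2.2.2 * C y.2.2.2.2.2 y.2.1 *
          (G₁ y.2.2.2.2.1 y.2.2.1 * A y.2.2.2.2.1 y.2.1)) * B y.1 y.2.1 := key
    _ = Matrix.trace (G₂unf * Kh * Bᵀ) := by
        simp only [Matrix.trace, Matrix.diag, Matrix.mul_apply, Matrix.transpose_apply,
          hG₂unf, hKh, Finset.mul_sum, Finset.sum_mul, Fintype.sum_prod_type]
end

section
/- If an order-3 tensor train G₁ • G₂ • G₃ with G₁ : I×R, G₂ : R×J×R, G₃ : R×K equals a rank-R Kruskal tensor ⟦A,B,C⟧ and the middle core admits the Kruskal decomposition G₂ = ⟦Q, B, S⟧ with Q, S : R×R, then reshaping gives ⟦A, B, C⟧ = ⟦G₁Q, B, G₃ᵀS⟧; in particular if the Kruskal decomposition of the left-hand tensor is unique up to permutation and scaling, there exist a permutation matrix P and invertible diagonal matrices D₁, D₃ with A = G₁ Q P D₁ and C = G₃ᵀ S P D₃. -/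
open Matrix

/-- If an order-3 tensor train `G₁ • G₂ • G₃` equals the rank-R Kruskal
tensor `⟦A,B,C⟧`, and the middle core decomposes as `G₂ = ⟦Q,B,S⟧`, then
`⟦A,B,C⟧ = ⟦G₁Q, B, G₃ᵀS⟧`; if moreover the Kruskal decomposition of this tensor is
unique up to permutation and scaling, then there exist a permutation `σ` and invertible
diagonal scalings `d₁, d₃` with `A = (G₁Q)·P·D₁` and `C = (G₃ᵀS)·P·D₃` entrywise. -/
theorem tt_core_cpd_gives_outer_factors {I J K R : ℕ}
    (G₁ : Matrix (Fin I) (Fin R) ℝ) (G₂ : Fin R → Fin J → Fin R → ℝ)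
    (G₃ : Matrix (Fin R) (Fin K) ℝ)
    (A : Matrix (Fin I) (Fin R) ℝ) (B : Matrix (Fin J) (Fin R) ℝ)
    (C : Matrix (Fin K) (Fin R) ℝ)
    (Q S : Matrix (Fin R) (Fin R) ℝ)
    (hTT : ∀ i j k, (∑ p, ∑ q, G₁ i p * G₂ p j q * G₃ q k)
        = ∑ r, A i r * B j r * C k r)
    (hG₂ : ∀ p j q, G₂ p j q = ∑ r, Q p r * B j r * S q r)
    (hunique : ∀ (A' : Matrix (Fin I) (Fin R) ℝ) (B' : Matrix (Fin J) (Fin R) ℝ)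
        (C' : Matrix (Fin K) (Fin R) ℝ),
        (∀ i j k, (∑ r, A i r * B j r * C k r) = ∑ r, A' i r * B' j r * C' k r) →
        ∃ (σ : Equiv.Perm (Fin R)) (da db dc : Fin R → ℝ),
          (∀ r, da r * db r * dc r = 1) ∧
          (∀ i r, A' i r = A i (σ r) * da r) ∧
          (∀ j r, B' j r = B j (σ r) * db r) ∧
          (∀ k r, C' k r = C k (σ r) * dc r)) :
    (∀ i j k, (∑ r, A i r * B j r * C k r)
        = ∑ r, (G₁ * Q) i r * B j r * (G₃ᵀ * S) k r) ∧
    ∃ (σ : Equiv.Perm (Fin R)) (d₁ d₃ : Fin R → ℝ),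
      (∀ r, d₁ r ≠ 0) ∧ (∀ r, d₃ r ≠ 0) ∧
      (∀ i r, A i r = (G₁ * Q) i (σ r) * d₁ r) ∧
      (∀ k r, C k r = (G₃ᵀ * S) k (σ r) * d₃ r) := by
  have key : ∀ i j k, (∑ r, A i r * B j r * C k r)
      = ∑ r, (G₁ * Q) i r * B j r * (G₃ᵀ * S) k r := by
    intro i j k
    rw [← hTT i j k]
    simp only [hG₂, Matrix.mul_apply, Matrix.transpose_apply]
    simp only [Finset.mul_sum, Finset.sum_mul]
    have h1 : ∀ p : Fin R, (∑ q : Fin R, ∑ r : Fin R,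
        G₁ i p * (Q p r * B j r * S q r) * G₃ q k)
        = ∑ r : Fin R, ∑ q : Fin R, G₁ i p * (Q p r * B j r * S q r) * G₃ q k :=
      fun p => Finset.sum_comm
    simp_rw [h1]
    rw [Finset.sum_comm]
    apply Finset.sum_congr rfl; intro r _
    rw [Finset.sum_comm]
    apply Finset.sum_congr rfl; intro p _
    apply Finset.sum_congr rfl; intro q _
    ring
  refine ⟨key, ?_⟩
  obtain ⟨σ, da, db, dc, hd, hA, hB, hC⟩ := hunique (G₁ * Q) B (G₃ᵀ * S) key
  have hda : ∀ r, da r ≠ 0 := by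
    intro r h
    have := hd r
    rw [h] at this; simp at this
  have hdc : ∀ r, dc r ≠ 0 := by
    intro r h
    have := hd r
    rw [h] at this; simp at this
  refine ⟨σ.symm, fun r => (da (σ.symm r))⁻¹, fun r => (dc (σ.symm r))⁻¹,
    fun r => inv_ne_zero (hda _), fun r => inv_ne_zero (hdc _), ?_, ?_⟩
  · intro i r
    rw [hA i (σ.symm r), Equiv.apply_symm_apply, mul_assoc,
      mul_inv_cancel₀ (hda _), mul_one]
  · intro k r
    rw [hC k (σ.symm r), Equiv.apply_symm_apply, mul_assoc,
      mul_inv_cancel₀ (hdc _), mul_one]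
end
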